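/- arXiv:1909.03045 — 6 statements merged into one kernel-verified Lean document; each statement's English description precedes it below -/
import Mathlib

section
/- Let β ∈ (0,1) and let x = (x_i) be a sequence with each x_i ∈ [0,1]. If ∑_i x_i ≥ θ for some θ ≥ 0, then ∑_i x_i^β ≥ ⌊θ⌋ + {θ}^β, where {θ} denotes the fractional part of θ. -/
/-!
Write `h s = ⌊s⌋ + {s} ^ β`. Then `h` is monotone and `h (s + t) ≤ h s + t ^ β` for `t ∈ [0, 1]`:
when `{s} + t` stays below `1` this is subadditivity of `t ↦ t ^ β`, and when it crosses `1` it
is concavity of `t ↦ t ^ β`. Induction gives `h (∑_F x_i) ≤ ∑_F x_i ^ β` for finite `F`, and for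
the full sum `S` the error `h S - h (∑_F x_i) ≤ (S - ∑_F x_i) ^ β` tends to `0`.
-/

open Set Filter Topology

theorem ConcaveOn.add_le_add_of_add_eq {s : Set ℝ} {f : ℝ → ℝ} (hf : ConcaveOn ℝ s f)
    {u v a b : ℝ} (hu : u ∈ s) (hv : v ∈ s) (hua : u ≤ a) (hav : a ≤ v) (hab : a + b = u + v) :
    f u + f v ≤ f a + f b := by
  rcases (hua.trans hav).eq_or_lt with rfl | huv
  · obtain rfl : a = u := le_antisymm hav hua
    obtain rfl : b = a := by linarith
    rfl
  set l := (v - a) / (v - u)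
  have hl0 : 0 ≤ l := div_nonneg (by linarith) (by linarith)
  have hl1 : 0 ≤ 1 - l := by
    rw [sub_nonneg, div_le_one (by linarith)]
    linarith
  have ha : l • u + (1 - l) • v = a := by
    simp only [l, smul_eq_mul]
    field_simp
    ring
  have hb : (1 - l) • u + l • v = b := by
    rw [show b = u + v - a by linarith]
    simp only [l, smul_eq_mul]
    field_simp
    ring
  have h₁ := hf.2 hu hv hl0 hl1 (by ring)
  have h₂ := hf.2 hu hv hl1 hl0 (by ring)
  rw [ha] at h₁
  rw [hb] at h₂
  simp only [smul_eq_mul] at h₁ h₂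
  linarith

noncomputable def floorAddFractRpow (β s : ℝ) : ℝ := ⌊s⌋ + Int.fract s ^ β

namespace floorAddFractRpow

variable {β : ℝ}

theorem intCast_add (n : ℤ) (s : ℝ) :
    floorAddFractRpow β (n + s) = n + floorAddFractRpow β s := by
  simp only [floorAddFractRpow, Int.floor_intCast_add, Int.fract_intCast_add]
  push_cast
  ring

theorem eq_rpow_of_mem_Ico {s : ℝ} (hs : s ∈ Ico 0 1) : floorAddFractRpow β s = s ^ β := by
  simp [floorAddFractRpow, Int.floor_eq_zero_iff.2 hs, Int.fract_eq_self.2 hs]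

theorem monotone (hβ : 0 ≤ β) : Monotone (floorAddFractRpow β) := by
  intro s s' hss'
  rcases (Int.floor_le_floor hss').eq_or_lt with hfloor | hfloor
  · have hfract : Int.fract s ≤ Int.fract s' := by
      simp only [Int.fract, hfloor]
      linarith
    simp only [floorAddFractRpow, hfloor]
    gcongr
  · have h₁ : Int.fract s ^ β ≤ 1 :=
      Real.rpow_le_one (Int.fract_nonneg s) (Int.fract_lt_one s).le hβ
    have h₂ : 0 ≤ Int.fract s' ^ β := Real.rpow_nonneg (Int.fract_nonneg s') β
    have h₃ : (⌊s⌋ : ℝ) + 1 ≤ ⌊s'⌋ := by exact_mod_cast hfloor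
    simp only [floorAddFractRpow]
    linarith

theorem add_le_rpow_add_rpow (hβ0 : 0 ≤ β) (hβ1 : β ≤ 1) {r t : ℝ} (hr : r ∈ Ico 0 1)
    (ht : t ∈ Icc 0 1) : floorAddFractRpow β (r + t) ≤ r ^ β + t ^ β := by
  rcases lt_or_ge (r + t) 1 with hlt | hge
  · rw [eq_rpow_of_mem_Ico ⟨by linarith [hr.1, ht.1], hlt⟩]
    exact Real.rpow_add_le_add_rpow hr.1 ht.1 hβ0 hβ1
  · have hsplit : r + t = ((1 : ℤ) : ℝ) + (r + t - 1) := by push_cast; ring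
    rw [hsplit, intCast_add, eq_rpow_of_mem_Ico ⟨by linarith, by linarith [hr.2, ht.2]⟩]
    have := (Real.concaveOn_rpow hβ0 hβ1).add_le_add_of_add_eq (u := r + t - 1) (v := 1)
      (a := r) (b := t) (mem_Ici.2 (by linarith)) (mem_Ici.2 zero_le_one) (by linarith [ht.2])
      hr.2.le (by ring)
    simp only [Real.one_rpow] at this
    linarith

theorem add_le (hβ0 : 0 ≤ β) (hβ1 : β ≤ 1) (s : ℝ) {t : ℝ} (ht : t ∈ Icc 0 1) :
    floorAddFractRpow β (s + t) ≤ floorAddFractRpow β s + t ^ β := by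
  have hs : s + t = ⌊s⌋ + (Int.fract s + t) := by rw [← add_assoc, Int.floor_add_fract]
  rw [hs, intCast_add]
  have := add_le_rpow_add_rpow hβ0 hβ1 ⟨Int.fract_nonneg s, Int.fract_lt_one s⟩ ht
  change _ ≤ (⌊s⌋ + Int.fract s ^ β : ℝ) + t ^ β
  linarith

theorem sum_le {ι : Type*} (hβ0 : 0 < β) (hβ1 : β ≤ 1) {x : ι → ℝ} (hx : ∀ i, x i ∈ Icc 0 1)
    (F : Finset ι) : floorAddFractRpow β (∑ i ∈ F, x i) ≤ ∑ i ∈ F, x i ^ β := by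
  classical
  induction F using Finset.induction_on with
  | empty => simp [floorAddFractRpow, Real.zero_rpow hβ0.ne']
  | insert a F ha ih =>
    rw [Finset.sum_insert ha, Finset.sum_insert ha, add_comm, add_comm (x a ^ β)]
    exact (add_le hβ0.le hβ1 _ (hx a)).trans (by gcongr)

end floorAddFractRpow

theorem ENNReal.ofReal_floorAddFractRpow_tsum_le {ι : Type*} {β : ℝ} (hβ0 : 0 < β)
    (hβ1 : β ≤ 1) {x : ι → ℝ} (hx : ∀ i, x i ∈ Icc 0 1) (hsum : Summable x) :
    ENNReal.ofReal (floorAddFractRpow β (∑' i, x i)) ≤ ∑' i, ENNReal.ofReal (x i ^ β) := by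
  set S := ∑' i, x i
  have hpartial : Tendsto (fun F : Finset ι => ∑ i ∈ F, x i) atTop (𝓝 S) := hsum.hasSum
  have hgap :
      Tendsto (fun F : Finset ι => ENNReal.ofReal ((S - ∑ i ∈ F, x i) ^ β)) atTop (𝓝 0) := by
    have hdiff : Tendsto (fun F : Finset ι => S - ∑ i ∈ F, x i) atTop (𝓝 0) := by
      simpa using hpartial.const_sub S
    have := (Real.continuousAt_rpow_const 0 β (Or.inr hβ0.le)).tendsto.comp hdiff
    simpa [Real.zero_rpow hβ0.ne'] using ENNReal.tendsto_ofReal this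
  refine ge_of_tendsto (by simpa using tendsto_const_nhds.add hgap) ?_
  filter_upwards [hpartial.eventually (eventually_gt_nhds (sub_one_lt S))] with F hF
  have hFS : ∑ i ∈ F, x i ≤ S := hsum.sum_le_tsum F fun i _ => (hx i).1
  calc ENNReal.ofReal (floorAddFractRpow β S)
      ≤ ENNReal.ofReal (∑ i ∈ F, x i ^ β + (S - ∑ i ∈ F, x i) ^ β) := by
        refine ENNReal.ofReal_le_ofReal ?_
        have := floorAddFractRpow.add_le hβ0.le hβ1 (∑ i ∈ F, x i)
          (t := S - ∑ i ∈ F, x i) ⟨by linarith, by linarith⟩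
        rw [add_sub_cancel] at this
        linarith [floorAddFractRpow.sum_le hβ0 hβ1 hx F]
    _ = ∑ i ∈ F, ENNReal.ofReal (x i ^ β) + ENNReal.ofReal ((S - ∑ i ∈ F, x i) ^ β) := by
        have hnonneg : ∀ i ∈ F, 0 ≤ x i ^ β := fun i _ => Real.rpow_nonneg (hx i).1 β
        rw [ENNReal.ofReal_add (Finset.sum_nonneg hnonneg) (by positivity),
          ENNReal.ofReal_sum_of_nonneg hnonneg]
    _ ≤ ∑' i, ENNReal.ofReal (x i ^ β) + ENNReal.ofReal ((S - ∑ i ∈ F, x i) ^ β) := by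
        gcongr
        exact ENNReal.sum_le_tsum F

theorem stmt_0_general (β θ : ℝ) (hβ0 : 0 < β) (hβ1 : β < 1)
    (x : ℕ → ℝ) (hx : ∀ i, x i ∈ Set.Icc (0 : ℝ) 1)
    (hsum : Summable x) (h : θ ≤ ∑' i, x i) :
    ENNReal.ofReal ((⌊θ⌋ : ℝ) + Int.fract θ ^ β) ≤ ∑' i, ENNReal.ofReal (x i ^ β) :=
  (ENNReal.ofReal_le_ofReal (floorAddFractRpow.monotone hβ0.le h)).trans
    (ENNReal.ofReal_floorAddFractRpow_tsum_le hβ0 hβ1.le hx hsum)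

/-- If `x i ∈ [0,1]` is a summable family with `∑ x i ≥ θ ≥ 0`, then
`∑ x i ^ β ≥ ⌊θ⌋ + {θ}^β` for any `β ∈ (0,1)` (sum taken in `ℝ≥0∞` since the
left side may be infinite). -/
theorem stmt_0 (β θ : ℝ) (hβ0 : 0 < β) (hβ1 : β < 1)
    (x : ℕ → ℝ) (hx : ∀ i, x i ∈ Set.Icc (0 : ℝ) 1)
    (hsum : Summable x) (hθ : 0 ≤ θ) (h : θ ≤ ∑' i, x i) :
    ENNReal.ofReal ((⌊θ⌋ : ℝ) + Int.fract θ ^ β) ≤ ∑' i, ENNReal.ofReal (x i ^ β) :=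
  stmt_0_general β θ hβ0 hβ1 x hx hsum h
end

section
/- For 0 ≤ x ≤ p ≤ 1/2, the binary relative entropy satisfies I_p(p - x) ≥ I_p(p + x). -/
/-!
Let `F(t) = I_p(p - t) - I_p(p + t)`, so `F(0) = 0`. Since `I_p'(y) = log(y/p) - log((1-y)/(1-p))`,
`F'(t) = log(1 - (t/(1-p))²) - log(1 - (t/p)²)`, which is nonnegative because `p ≤ 1 - p`.
Hence `F` is monotone on `[0, p]` and `F(x) ≥ 0`.
-/

/-- Binary relative entropy `I_p(y) = y log(y/p) + (1-y) log((1-y)/(1-p))`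
(Mathlib's `Real.log 0 = 0` gives the convention `0 · log 0 = 0`). -/
noncomputable def binEnt (p y : ℝ) : ℝ :=
  y * Real.log (y / p) + (1 - y) * Real.log ((1 - y) / (1 - p))

open Real Set

lemma continuous_mul_log_div {c : ℝ} (hc : c ≠ 0) : Continuous fun y => y * log (y / c) := by
  have h : (fun y => y * log (y / c)) = fun y => c * (y / c * log (y / c)) := by
    funext y
    rw [← mul_assoc, mul_div_cancel₀ _ hc]
  rw [h]
  exact continuous_const.mul (continuous_mul_log.comp (continuous_id.div_const c))

lemma hasDerivAt_mul_log_div {c y : ℝ} (hc : c ≠ 0) (hy : y ≠ 0) :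
    HasDerivAt (fun y => y * log (y / c)) (log (y / c) + 1) y := by
  have h := ((hasDerivAt_mul_log (div_ne_zero hy hc)).comp y
    ((hasDerivAt_id y).div_const c)).const_mul c
  refine (h.congr_deriv ?_).congr_of_eventuallyEq (Filter.Eventually.of_forall fun z => ?_)
  · field_simp
  · simp only [Function.comp_apply, id]
    rw [← mul_assoc, mul_div_cancel₀ _ hc]

lemma continuous_binEnt {p : ℝ} (hp0 : p ≠ 0) (hp1 : p ≠ 1) : Continuous (binEnt p) :=
  (continuous_mul_log_div hp0).add
    ((continuous_mul_log_div (sub_ne_zero.2 hp1.symm)).comp (continuous_const.sub continuous_id))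

lemma hasDerivAt_binEnt {p y : ℝ} (hp0 : p ≠ 0) (hp1 : p ≠ 1) (hy0 : y ≠ 0) (hy1 : y ≠ 1) :
    HasDerivAt (binEnt p) (log (y / p) - log ((1 - y) / (1 - p))) y := by
  have h := (hasDerivAt_mul_log_div hp0 hy0).add
    ((hasDerivAt_mul_log_div (sub_ne_zero.2 hp1.symm) (sub_ne_zero.2 hy1.symm)).comp y
      ((hasDerivAt_id y).const_sub 1))
  exact h.congr_deriv (by ring)

lemma log_div_add_log_div {a t : ℝ} (ha : 0 < a) (ht : |t| < a) :
    log ((a + t) / a) + log ((a - t) / a) = log (1 - (t / a) ^ 2) := by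
  obtain ⟨hta, hat⟩ := abs_lt.1 ht
  rw [← log_mul (div_pos (by linarith) ha).ne' (div_pos (by linarith) ha).ne']
  congr 1
  field_simp
  ring

lemma monotoneOn_binEnt_sub_binEnt {p : ℝ} (hp0 : 0 < p) (hp : p ≤ 1 / 2) :
    MonotoneOn (fun t => binEnt p (p - t) - binEnt p (p + t)) (Icc 0 p) := by
  have hp1 : p ≠ 1 := by linarith
  have hcont := continuous_binEnt hp0.ne' hp1
  refine monotoneOn_of_hasDerivWithinAt_nonneg (convex_Icc 0 p)
    (f' := fun t => log (1 - (t / (1 - p)) ^ 2) - log (1 - (t / p) ^ 2))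
    ((hcont.comp (continuous_const.sub continuous_id)).sub
      (hcont.comp (continuous_const.add continuous_id))).continuousOn
    (fun t ht => ?_) (fun t ht => ?_)
  all_goals
    rw [interior_Icc] at ht
    obtain ⟨ht0, htp⟩ := ht
  · have hminus := (hasDerivAt_binEnt (y := p - t) hp0.ne' hp1 (by linarith) (by linarith)).comp t
      ((hasDerivAt_id t).const_sub p)
    have hplus := (hasDerivAt_binEnt (y := p + t) hp0.ne' hp1 (by linarith) (by linarith)).comp t
      ((hasDerivAt_id t).const_add p)
    have hlog_p := log_div_add_log_div hp0 (abs_lt.2 ⟨by linarith, htp⟩)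
    have hlog_q := log_div_add_log_div (a := 1 - p) (t := t) (by linarith)
      (abs_lt.2 ⟨by linarith, by linarith⟩)
    refine ((hminus.sub hplus).congr_deriv ?_).hasDerivWithinAt
    rw [show 1 - (p - t) = 1 - p + t by ring, show 1 - (p + t) = 1 - p - t by ring]
    linarith
  · have hpos : 0 < 1 - (t / p) ^ 2 := by
      rw [sub_pos, sq_lt_one_iff₀ (by positivity), div_lt_one hp0]
      exact htp
    have hsq : (t / (1 - p)) ^ 2 ≤ (t / p) ^ 2 :=
      pow_le_pow_left₀ (div_nonneg ht0.le (by linarith))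
        (div_le_div_of_nonneg_left ht0.le hp0 (by linarith)) 2
    exact sub_nonneg.2 (log_le_log hpos (by linarith))

/-- For `0 ≤ x ≤ p ≤ 1/2` one has `I_p(p - x) ≥ I_p(p + x)`. -/
theorem stmt_1 (p x : ℝ) (hx0 : 0 ≤ x) (hxp : x ≤ p) (hp : p ≤ 1 / 2) :
    binEnt p (p + x) ≤ binEnt p (p - x) := by
  obtain rfl | hp0 := (hx0.trans hxp).eq_or_lt
  · simp [le_antisymm hxp hx0]
  have h := monotoneOn_binEnt_sub_binEnt hp0 hp ⟨le_rfl, hp0.le⟩ ⟨hx0, hxp⟩ hx0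
  simp only [sub_zero, add_zero, sub_self] at h
  linarith
end

section
/- Let l ≥ 3 and let η_1,…,η_n ∈ [−1,1] satisfy ∑_i η_i^l ≥ 1 + δ for some δ > 0. Then ∑_i η_i² − 1 ≥ ⌊1+δ⌋ − 1 + {1+δ}^{2/l}, i.e. ∑_i η_i² ≥ ⌊1+δ⌋ + {1+δ}^{2/l}. -/
/-- Two-point concavity inequality for `rpow`: decreasing differences. -/
lemma concave_pair_rpow {β : ℝ} (hβ0 : 0 ≤ β) (hβ1 : β ≤ 1) {u x s : ℝ}
    (hu : 0 ≤ u) (hux : u ≤ x) (hs : 0 ≤ s) :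
    (x + s) ^ β + u ^ β ≤ x ^ β + (u + s) ^ β := by
  rcases eq_or_lt_of_le hux with rfl | hux'
  · linarith [le_refl ((u + s) ^ β + u ^ β)]
  rcases eq_or_lt_of_le hs with rfl | hs'
  · rw [add_zero, add_zero]
  have hD : 0 < x + s - u := by linarith
  have hcon := Real.concaveOn_rpow hβ0 hβ1
  have hmemu : u ∈ Set.Ici (0:ℝ) := hu
  have hmemd : x + s ∈ Set.Ici (0:ℝ) := by simp; linarith
  have ht0 : (0:ℝ) ≤ s / (x + s - u) := by positivity
  have ht1 : (0:ℝ) ≤ (x - u) / (x + s - u) := by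
    apply div_nonneg (by linarith) hD.le
  have hsum : s / (x + s - u) + (x - u) / (x + s - u) = 1 := by
    field_simp
    ring
  have h1 := hcon.2 hmemu hmemd ht0 ht1 hsum
  have h2 := hcon.2 hmemu hmemd ht1 ht0 (by linarith)
  have e1 : (s / (x + s - u)) • u + ((x - u) / (x + s - u)) • (x + s) = x := by
    rw [smul_eq_mul, smul_eq_mul]; field_simp; ring
  have e2 : ((x - u) / (x + s - u)) • u + (s / (x + s - u)) • (x + s) = u + s := by
    rw [smul_eq_mul, smul_eq_mul]; field_simp; ring
  rw [e1] at h1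
  rw [e2] at h2
  simp only [smul_eq_mul] at h1 h2
  have hb : (x - u) / (x + s - u) = 1 - s / (x + s - u) := by linarith
  rw [hb] at h1 h2
  ring_nf at h1 h2 ⊢
  nlinarith [h1, h2]

/-- Monotonicity of `S ↦ ⌊S⌋ + {S}^β`. -/
lemma floor_fract_rpow_mono {β : ℝ} (hβ0 : 0 < β) (hβ1 : β ≤ 1) {S S' : ℝ} (h : S ≤ S') :
    (⌊S⌋ : ℝ) + Int.fract S ^ β ≤ (⌊S'⌋ : ℝ) + Int.fract S' ^ β := by
  have hm : ⌊S⌋ ≤ ⌊S'⌋ := Int.floor_mono h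
  rcases eq_or_lt_of_le hm with he | hlt
  · have hf : Int.fract S ≤ Int.fract S' := by
      unfold Int.fract
      rw [← he]
      linarith
    have := Real.rpow_le_rpow (Int.fract_nonneg S) hf hβ0.le
    rw [he]
    linarith
  · have h1 : Int.fract S ^ β ≤ 1 :=
      Real.rpow_le_one (Int.fract_nonneg S) (Int.fract_lt_one S).le hβ0.le
    have h2 : (0:ℝ) ≤ Int.fract S' ^ β := Real.rpow_nonneg (Int.fract_nonneg S') β
    have h3 : (⌊S⌋ : ℝ) + 1 ≤ (⌊S'⌋ : ℝ) := by exact_mod_cast hlt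
    linarith

/-- Key lemma: for `x_i ∈ [0,1]` and `β ∈ (0,1]`,
`∑ x_i^β ≥ ⌊∑ x_i⌋ + {∑ x_i}^β`. -/
lemma floor_fract_rpow_le_sum {ι : Type*} {β : ℝ} (hβ0 : 0 < β) (hβ1 : β ≤ 1)
    (s : Finset ι) (x : ι → ℝ) (hx : ∀ i ∈ s, x i ∈ Set.Icc (0:ℝ) 1) :
    (⌊∑ i ∈ s, x i⌋ : ℝ) + Int.fract (∑ i ∈ s, x i) ^ β ≤ ∑ i ∈ s, x i ^ β := by
  induction s using Finset.cons_induction with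
  | empty =>
      simp [Real.zero_rpow (ne_of_gt hβ0)]
  | cons a t ha IH =>
      rw [Finset.sum_cons, Finset.sum_cons]
      have hXmem := hx a (Finset.mem_cons_self a t)
      obtain ⟨hX0, hX1⟩ := hXmem
      have hx' : ∀ i ∈ t, x i ∈ Set.Icc (0:ℝ) 1 := fun i hi =>
        hx i (Finset.mem_cons_of_mem hi)
      have IH' := IH hx'
      set X := x a with hXdef
      set T := ∑ i ∈ t, x i with hTdef
      set F := Int.fract T with hFdef
      have hF0 : 0 ≤ F := Int.fract_nonneg T
      have hF1 : F < 1 := Int.fract_lt_one T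
      have hTsplit : X + T = (X + F) + (⌊T⌋ : ℤ) := by
        have := Int.fract_add_floor T
        push_cast
        linarith [Int.fract_add_floor T]
      have hfl : ⌊X + T⌋ = ⌊X + F⌋ + ⌊T⌋ := by
        rw [hTsplit, Int.floor_add_intCast]
      have hfr : Int.fract (X + T) = Int.fract (X + F) := by
        rw [hTsplit, Int.fract_add_intCast]
      have key : (⌊X + T⌋ : ℝ) + Int.fract (X + T) ^ β ≤ X ^ β + ((⌊T⌋ : ℝ) + F ^ β) := by
        rcases lt_or_ge (X + F) 1 with hc | hc
        · have hXF0 : 0 ≤ X + F := by linarith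
          have hfl0 : ⌊X + F⌋ = 0 := Int.floor_eq_zero_iff.2 ⟨hXF0, hc⟩
          have hfr0 : Int.fract (X + F) = X + F := Int.fract_eq_self.2 ⟨hXF0, hc⟩
          have sub := concave_pair_rpow hβ0.le hβ1 (le_refl (0:ℝ)) hX0 hF0
          rw [Real.zero_rpow (ne_of_gt hβ0), zero_add] at sub
          rw [hfl, hfr, hfl0, hfr0]
          push_cast
          linarith
        · have hc2 : X + F < 2 := by linarith
          have hfl1 : ⌊X + F⌋ = 1 := by
            apply Int.floor_eq_iff.2
            push_cast
            exact ⟨hc, by linarith⟩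
          have hfr1 : Int.fract (X + F) = X + F - 1 := by
            unfold Int.fract
            rw [hfl1]; push_cast; ring
          have hu0 : (0:ℝ) ≤ X + F - 1 := by linarith
          have hux : X + F - 1 ≤ X := by linarith
          have hs0 : (0:ℝ) ≤ 1 - X := by linarith
          have sub := concave_pair_rpow hβ0.le hβ1 hu0 hux hs0
          have e1 : X + (1 - X) = 1 := by ring
          have e2 : X + F - 1 + (1 - X) = F := by ring
          rw [e1, e2, Real.one_rpow] at sub
          rw [hfl, hfr, hfl1, hfr1]
          push_cast
          linarith
      calc (⌊X + T⌋ : ℝ) + Int.fract (X + T) ^ β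
          ≤ X ^ β + ((⌊T⌋ : ℝ) + F ^ β) := key
        _ ≤ X ^ β + ∑ i ∈ t, x i ^ β := by linarith

/-- If `η_i ∈ [-1,1]` satisfy `∑ η_i^l ≥ 1 + δ` for some `l ≥ 3` and `δ > 0`, then
`∑ η_i² ≥ ⌊1+δ⌋ + {1+δ}^{2/l}`. -/
theorem stmt_6 {n : ℕ} (l : ℕ) (hl : 3 ≤ l) (δ : ℝ) (hδ : 0 < δ)
    (η : Fin n → ℝ) (hη : ∀ i, |η i| ≤ 1)
    (h : 1 + δ ≤ ∑ i, η i ^ l) :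
    (⌊(1 : ℝ) + δ⌋ : ℝ) + Int.fract (1 + δ) ^ ((2 : ℝ) / l) ≤ ∑ i, η i ^ 2 := by
  have hl0 : (0:ℝ) < l := by positivity
  have hl3 : (3:ℝ) ≤ l := by exact_mod_cast hl
  set β : ℝ := (2:ℝ) / l with hβdef
  have hβ0 : 0 < β := by positivity
  have hβ1 : β ≤ 1 := by
    rw [hβdef, div_le_one hl0]; linarith
  set x : Fin n → ℝ := fun i => |η i| ^ l with hxdef
  have hx : ∀ i ∈ Finset.univ, x i ∈ Set.Icc (0:ℝ) 1 := by
    intro i _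
    exact ⟨pow_nonneg (abs_nonneg _) l, pow_le_one₀ (abs_nonneg _) (hη i)⟩
  have hsum : 1 + δ ≤ ∑ i, x i := by
    refine le_trans h (Finset.sum_le_sum fun i _ => ?_)
    calc η i ^ l ≤ |η i ^ l| := le_abs_self _
      _ = |η i| ^ l := abs_pow _ _
  have hpow : ∀ i, (x i) ^ β = η i ^ 2 := by
    intro i
    rw [hxdef]
    have : ((|η i| ^ l : ℝ)) ^ β = |η i| ^ ((l : ℝ) * β) := by
      rw [← Real.rpow_natCast |η i| l, ← Real.rpow_mul (abs_nonneg _)]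
    rw [this]
    have hlβ : (l : ℝ) * β = 2 := by
      rw [hβdef]; field_simp
    rw [hlβ]
    rw [show ((2:ℝ) = ((2:ℕ):ℝ)) by norm_num, Real.rpow_natCast, sq_abs]
  have main := floor_fract_rpow_le_sum hβ0 hβ1 Finset.univ x hx
  have mono := floor_fract_rpow_mono hβ0 hβ1 hsum
  calc (⌊(1 : ℝ) + δ⌋ : ℝ) + Int.fract (1 + δ) ^ β
      ≤ (⌊∑ i, x i⌋ : ℝ) + Int.fract (∑ i, x i) ^ β := mono
    _ ≤ ∑ i, x i ^ β := main
    _ = ∑ i, η i ^ 2 := Finset.sum_congr rfl fun i _ => hpow i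
end

section
/- Let M₁ be a path of length l ≥ 1 (with l edges) and let U: [0,1]² → [−1,1] be symmetric measurable with factor kernels U^{s_e} ∈ {U⁺, U⁻} on each edge. Then |t(M₁, U^s)| ≤ ‖d^±‖₂ · ‖U^±‖₂^{l−1}, where t(M₁, U^s) = ∫ ∏_{e=(i,i+1)} U^{s_e}(x_i, x_{i+1}) dx₁ ⋯ dx_{l+1} and d^±(x) = ∫₀¹ U^{±}(x,y) dy with ± the sign of the first edge. -/
open MeasureTheory

/-- Positive (`true`) or negative (`false`) part of a kernel. -/
noncomputable def kernelPart (U : ℝ → ℝ → ℝ) : Bool → ℝ → ℝ → ℝ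
  | true => fun x y => max (U x y) 0
  | false => fun x y => max (-(U x y)) 0

/-!
Integrating out the vertices of the path from the first one, the density equals
`∫ d(y) g(y) dy`, where `d` is the degree function of the first edge kernel (symmetry lets the
first vertex be integrated against the second) and `g(y)` is the density of the remaining
`l - 1` edges with their first vertex pinned at `y`. Cauchy–Schwarz bounds this by
`‖d‖₂ ‖g‖₂`, and Cauchy–Schwarz in the inner variable at each edge gives
`‖g‖₂² ≤ ∏ₑ ‖U^{s_e}‖₂²` over the remaining edges.
-/

namespace PathDensity

variable {α : Type*} {n : ℕ}

def pathProduct (V : Fin n → α → α → ℝ) (y : Fin (n + 1) → α) : ℝ :=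
  ∏ i, V i (y i.castSucc) (y i.succ)

lemma pathProduct_cons_cons (V : Fin (n + 1) → α → α → ℝ) (x a : α) (z : Fin n → α) :
    pathProduct V (Fin.cons x (Fin.cons a z)) =
      V 0 x a * pathProduct (fun i => V i.succ) (Fin.cons a z) := by
  simp [pathProduct, Fin.prod_univ_succ]

lemma abs_pathProduct_le_one {V : Fin n → α → α → ℝ} (hV : ∀ i x y, |V i x y| ≤ 1)
    (y : Fin (n + 1) → α) : |pathProduct V y| ≤ 1 := by
  rw [pathProduct, Finset.abs_prod]
  exact Finset.prod_le_one (fun _ _ => abs_nonneg _) fun i _ => hV i _ _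

variable [MeasurableSpace α]

lemma _root_.Measurable.integrable_of_abs_le {μ : Measure α} [IsFiniteMeasure μ] {f : α → ℝ}
    (hf : Measurable f) {C : ℝ} (hC : ∀ x, |f x| ≤ C) : Integrable f μ :=
  memLp_one_iff_integrable.1 <| .of_bound hf.aestronglyMeasurable C (.of_forall hC)

lemma integral_pi_fin_succ_cons {μ : Measure α} [SigmaFinite μ]
    {f : (Fin (n + 1) → α) → ℝ} (hf : Integrable f (Measure.pi fun _ => μ)) :
    ∫ y, f y ∂(Measure.pi fun _ => μ) = ∫ a, ∫ z, f (Fin.cons a z) ∂(Measure.pi fun _ => μ) ∂μ := by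
  have e := (measurePreserving_piFinSuccAbove (fun _ : Fin (n + 1) => μ) 0).symm
  have hcons : ∀ p : α × (Fin n → α),
      (MeasurableEquiv.piFinSuccAbove (fun _ : Fin (n + 1) => α) 0).symm p = Fin.cons p.1 p.2 :=
    fun p => by simp [MeasurableEquiv.piFinSuccAbove_symm_apply, Fin.insertNthEquiv]
  rw [← e.integrable_comp_emb (MeasurableEquiv.measurableEmbedding _)] at hf
  rw [← e.integral_comp']
  simp_rw [Function.comp_def, hcons] at hf ⊢
  exact integral_prod _ hf

lemma abs_integral_mul_le_sqrt_mul_sqrt {μ : Measure α} {f g : α → ℝ}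
    (hf : MemLp f 2 μ) (hg : MemLp g 2 μ) :
    |∫ a, f a * g a ∂μ| ≤ √(∫ a, f a ^ 2 ∂μ) * √(∫ a, g a ^ 2 ∂μ) := by
  have h := integral_mul_norm_le_Lp_mul_Lq (μ := μ) .two_two
    (by simpa using hf) (by simpa using hg)
  simp only [Real.norm_eq_abs, Real.rpow_two, sq_abs, ← Real.sqrt_eq_rpow] at h
  simp_rw [← abs_mul] at h
  exact abs_integral_le_integral_abs.trans h

lemma measurable_pathProduct {V : Fin n → α → α → ℝ}
    (hV : ∀ i, Measurable (Function.uncurry (V i))) : Measurable (pathProduct V) :=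
  Finset.measurable_prod _ fun i _ =>
    (hV i).comp (f := fun y : Fin (n + 1) → α => (y i.castSucc, y i.succ))
      ((measurable_pi_apply _).prodMk (measurable_pi_apply _))

lemma measurable_fin_cons (x : α) :
    Measurable fun z : Fin n → α => (Fin.cons x z : Fin (n + 1) → α) :=
  measurable_pi_iff.2 fun j => by cases j using Fin.cases <;> simp [measurable_pi_apply]

/-- The homomorphism density of the path with edge kernels `V 0, …, V (n - 1)`, with its first
vertex pinned at `x`. -/
noncomputable def rootedPathDensity (μ : Measure α) : (n : ℕ) → (Fin n → α → α → ℝ) → α → ℝ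
  | 0, _, _ => 1
  | n + 1, V, x => ∫ y, V 0 x y * rootedPathDensity μ n (fun i => V i.succ) y ∂μ

variable {μ : Measure α}

lemma measurable_rootedPathDensity [SFinite μ] :
    ∀ {n : ℕ} {V : Fin n → α → α → ℝ}, (∀ i, Measurable (Function.uncurry (V i))) →
      Measurable (rootedPathDensity μ n V)
  | 0, _, _ => measurable_const
  | n + 1, V, hV => by
    have hρ := measurable_rootedPathDensity (n := n) fun i => hV i.succ
    exact ((hV 0).mul (hρ.comp measurable_snd)).stronglyMeasurable.integral_prod_right'.measurable

variable [IsProbabilityMeasure μ]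

lemma abs_rootedPathDensity_le_one :
    ∀ {n : ℕ} {V : Fin n → α → α → ℝ}, (∀ i x y, |V i x y| ≤ 1) →
      ∀ x, |rootedPathDensity μ n V x| ≤ 1
  | 0, _, _, _ => by simp [rootedPathDensity]
  | n + 1, V, hV, x => by
    have hρ := abs_rootedPathDensity_le_one (n := n) fun i => hV i.succ
    have h := norm_integral_le_of_norm_le_const (μ := μ) (C := 1)
      (f := fun y => V 0 x y * rootedPathDensity μ n (fun i => V i.succ) y) (.of_forall fun y => by
        rw [Real.norm_eq_abs, abs_mul]
        exact mul_le_one₀ (hV 0 x y) (abs_nonneg _) (hρ y))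
    simpa [rootedPathDensity] using h

lemma memLp_rootedPathDensity {V : Fin n → α → α → ℝ}
    (hV : ∀ i, Measurable (Function.uncurry (V i))) (hV1 : ∀ i x y, |V i x y| ≤ 1)
    (p : ENNReal) : MemLp (rootedPathDensity μ n V) p μ :=
  .of_bound (measurable_rootedPathDensity hV).aestronglyMeasurable 1
    (.of_forall (abs_rootedPathDensity_le_one hV1))

lemma integral_pathProduct_cons :
    ∀ {n : ℕ} {V : Fin n → α → α → ℝ}, (∀ i, Measurable (Function.uncurry (V i))) →
      (∀ i x y, |V i x y| ≤ 1) → ∀ x,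
      ∫ z, pathProduct V (Fin.cons x z) ∂(Measure.pi fun _ => μ) = rootedPathDensity μ n V x
  | 0, _, _, _, _ => by simp [pathProduct, rootedPathDensity]
  | n + 1, V, hV, hV1, x => by
    have hint : Integrable (fun z => pathProduct V (Fin.cons x z)) (Measure.pi fun _ => μ) :=
      ((measurable_pathProduct hV).comp (measurable_fin_cons x)).integrable_of_abs_le
        fun z => abs_pathProduct_le_one hV1 _
    rw [integral_pi_fin_succ_cons hint]
    simp_rw [pathProduct_cons_cons, integral_const_mul,
      integral_pathProduct_cons (fun i => hV i.succ) (fun i => hV1 i.succ)]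
    rfl

lemma integral_pathProduct {V : Fin n → α → α → ℝ} (hV : ∀ i, Measurable (Function.uncurry (V i)))
    (hV1 : ∀ i x y, |V i x y| ≤ 1) :
    ∫ y, pathProduct V y ∂(Measure.pi fun _ => μ) = ∫ x, rootedPathDensity μ n V x ∂μ := by
  rw [integral_pi_fin_succ_cons ((measurable_pathProduct hV).integrable_of_abs_le
    (abs_pathProduct_le_one hV1))]
  simp_rw [integral_pathProduct_cons hV hV1]

lemma sq_rootedPathDensity_succ_le {V : Fin (n + 1) → α → α → ℝ}
    (hV : ∀ i, Measurable (Function.uncurry (V i))) (hV1 : ∀ i x y, |V i x y| ≤ 1) (x : α) :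
    rootedPathDensity μ (n + 1) V x ^ 2 ≤
      (∫ y, V 0 x y ^ 2 ∂μ) * ∫ y, rootedPathDensity μ n (fun i => V i.succ) y ^ 2 ∂μ := by
  have hVx : MemLp (V 0 x) 2 μ := .of_bound
    ((hV 0).comp measurable_prodMk_left).aestronglyMeasurable 1 (.of_forall (hV1 0 x))
  calc rootedPathDensity μ (n + 1) V x ^ 2
      ≤ (√(∫ y, V 0 x y ^ 2 ∂μ) * √(∫ y, rootedPathDensity μ n (fun i => V i.succ) y ^ 2 ∂μ)) ^ 2 :=
        sq_le_sq.2 ((abs_integral_mul_le_sqrt_mul_sqrt hVx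
          (memLp_rootedPathDensity (fun i => hV i.succ) (fun i => hV1 i.succ) 2)).trans
          (le_abs_self _))
    _ = _ := by
      rw [mul_pow, Real.sq_sqrt (integral_nonneg fun _ => sq_nonneg _),
        Real.sq_sqrt (integral_nonneg fun _ => sq_nonneg _)]

lemma integral_rootedPathDensity_sq_le :
    ∀ {n : ℕ} {V : Fin n → α → α → ℝ}, (∀ i, Measurable (Function.uncurry (V i))) →
      (∀ i x y, |V i x y| ≤ 1) →
      ∫ x, rootedPathDensity μ n V x ^ 2 ∂μ ≤ ∏ i, ∫ p, V i p.1 p.2 ^ 2 ∂(μ.prod μ)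
  | 0, _, _, _ => by simp [rootedPathDensity]
  | n + 1, V, hV, hV1 => by
    have hV0sq : Integrable (fun p : α × α => V 0 p.1 p.2 ^ 2) (μ.prod μ) :=
      ((hV 0).pow_const 2).integrable_of_abs_le (C := 1) fun p => by
        rw [abs_pow]; exact pow_le_one₀ (abs_nonneg _) (hV1 0 p.1 p.2)
    calc ∫ x, rootedPathDensity μ (n + 1) V x ^ 2 ∂μ
        ≤ ∫ x, (∫ y, V 0 x y ^ 2 ∂μ) *
            ∫ y, rootedPathDensity μ n (fun i => V i.succ) y ^ 2 ∂μ ∂μ :=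
          integral_mono_of_nonneg (.of_forall fun _ => sq_nonneg _)
            (hV0sq.integral_prod_left.mul_const _)
            (.of_forall (sq_rootedPathDensity_succ_le hV hV1))
      _ = (∫ p, V 0 p.1 p.2 ^ 2 ∂(μ.prod μ)) *
            ∫ y, rootedPathDensity μ n (fun i => V i.succ) y ^ 2 ∂μ := by
          rw [integral_mul_const, integral_prod _ hV0sq]
      _ ≤ _ := by
          rw [Fin.prod_univ_succ]
          exact mul_le_mul_of_nonneg_left
            (integral_rootedPathDensity_sq_le (fun i => hV i.succ) (fun i => hV1 i.succ))
            (integral_nonneg fun _ => sq_nonneg _)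

lemma sqrt_integral_rootedPathDensity_sq_le {V : Fin n → α → α → ℝ}
    (hV : ∀ i, Measurable (Function.uncurry (V i))) (hV1 : ∀ i x y, |V i x y| ≤ 1) {M : ℝ}
    (hM0 : 0 ≤ M) (hM : ∀ i, ∫ p, V i p.1 p.2 ^ 2 ∂(μ.prod μ) ≤ M ^ 2) :
    √(∫ x, rootedPathDensity μ n V x ^ 2 ∂μ) ≤ M ^ n := by
  rw [Real.sqrt_le_left (pow_nonneg hM0 n)]
  calc ∫ x, rootedPathDensity μ n V x ^ 2 ∂μ ≤ ∏ i, ∫ p, V i p.1 p.2 ^ 2 ∂(μ.prod μ) :=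
        integral_rootedPathDensity_sq_le hV hV1
    _ ≤ ∏ _ : Fin n, M ^ 2 :=
        Finset.prod_le_prod (fun _ _ => integral_nonneg fun _ => sq_nonneg _) fun i _ => hM i
    _ = (M ^ n) ^ 2 := by simp [← pow_mul, mul_comm]

lemma integral_rootedPathDensity_succ_of_symm {V : Fin (n + 1) → α → α → ℝ}
    (hV : ∀ i, Measurable (Function.uncurry (V i))) (hV1 : ∀ i x y, |V i x y| ≤ 1)
    (hsymm : ∀ x y, V 0 x y = V 0 y x) :
    ∫ x, rootedPathDensity μ (n + 1) V x ∂μ =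
      ∫ y, (∫ x, V 0 y x ∂μ) * rootedPathDensity μ n (fun i => V i.succ) y ∂μ := by
  have hint : Integrable
      (Function.uncurry fun x y => V 0 x y * rootedPathDensity μ n (fun i => V i.succ) y)
      (μ.prod μ) :=
    ((hV 0).mul ((measurable_rootedPathDensity fun i => hV i.succ).comp measurable_snd)
      ).integrable_of_abs_le fun p => by
        simp only [Pi.mul_apply, Function.comp_apply, abs_mul]
        exact mul_le_one₀ (hV1 0 _ _) (abs_nonneg _)
          (abs_rootedPathDensity_le_one (fun i => hV1 i.succ) _)
  simp_rw [rootedPathDensity, integral_integral_swap hint, integral_mul_const, hsymm]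


lemma abs_integral_pathProduct_le {V : Fin (n + 1) → α → α → ℝ}
    (hV : ∀ i, Measurable (Function.uncurry (V i))) (hV1 : ∀ i x y, |V i x y| ≤ 1)
    (hsymm : ∀ x y, V 0 x y = V 0 y x) {M : ℝ} (hM0 : 0 ≤ M)
    (hM : ∀ i : Fin n, ∫ p, V i.succ p.1 p.2 ^ 2 ∂(μ.prod μ) ≤ M ^ 2) :
    |∫ y, pathProduct V y ∂(Measure.pi fun _ => μ)| ≤
      √(∫ x, (∫ y, V 0 x y ∂μ) ^ 2 ∂μ) * M ^ n := by
  have hd : MemLp (fun x => ∫ y, V 0 x y ∂μ) 2 μ := .of_bound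
    (hV 0).stronglyMeasurable.integral_prod_right'.aestronglyMeasurable 1 (.of_forall fun x => by
      simpa using norm_integral_le_of_norm_le_const (μ := μ) (f := V 0 x) (C := 1)
        (.of_forall (hV1 0 x)))
  rw [integral_pathProduct hV hV1, integral_rootedPathDensity_succ_of_symm hV hV1 hsymm]
  exact (abs_integral_mul_le_sqrt_mul_sqrt hd
    (memLp_rootedPathDensity (fun i => hV i.succ) (fun i => hV1 i.succ) 2)).trans
    (mul_le_mul_of_nonneg_left (sqrt_integral_rootedPathDensity_sq_le (fun i => hV i.succ)
      (fun i => hV1 i.succ) hM0 hM) (Real.sqrt_nonneg _))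

end PathDensity

open PathDensity

lemma measurable_kernelPart {U : ℝ → ℝ → ℝ} (hU : Measurable fun q : ℝ × ℝ => U q.1 q.2)
    (b : Bool) : Measurable (Function.uncurry (kernelPart U b)) := by
  cases b
  · exact hU.neg.max measurable_const
  · exact hU.max measurable_const

lemma abs_kernelPart_le_one {U : ℝ → ℝ → ℝ} (hU : ∀ x y, |U x y| ≤ 1) (b : Bool) (x y : ℝ) :
    |kernelPart U b x y| ≤ 1 := by
  have := abs_le.1 (hU x y)
  cases b <;> simp only [kernelPart] <;> rw [abs_of_nonneg (le_max_right _ _)] <;>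
    exact max_le (by linarith) zero_le_one

lemma kernelPart_comm {U : ℝ → ℝ → ℝ} (hU : ∀ x y, U x y = U y x) (b : Bool) (x y : ℝ) :
    kernelPart U b x y = kernelPart U b y x := by
  cases b <;> simp [kernelPart, hU x y]

/-- For a path `M₁` with `l ≥ 1` edges and a choice of signs `s` on the edges,
the homomorphism density of the signed parts of a symmetric kernel
`U : [0,1]² → [-1,1]` is bounded by `‖d^±‖₂ · (max ‖U⁺‖₂ ‖U⁻‖₂)^{l-1}`,
where `d^±` is the degree function of the part selected on the first edge. -/
theorem stmt_12 (l : ℕ) (hl : 1 ≤ l)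
    (U : ℝ → ℝ → ℝ) (s : Fin l → Bool)
    (hmeas : Measurable (fun q : ℝ × ℝ => U q.1 q.2))
    (hsym : ∀ x y, U x y = U y x)
    (hbd : ∀ x y, |U x y| ≤ 1) :
    |∫ x in (Set.univ.pi fun _ : Fin (l + 1) => Set.Icc (0 : ℝ) 1),
        ∏ i : Fin l, kernelPart U (s i) (x i.castSucc) (x i.succ)|
      ≤ Real.sqrt (∫ x in Set.Icc (0 : ℝ) 1,
            (∫ y in Set.Icc (0 : ℝ) 1, kernelPart U (s ⟨0, hl⟩) x y) ^ 2) *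
        (max (Real.sqrt (∫ q in Set.Icc (0 : ℝ) 1 ×ˢ Set.Icc (0 : ℝ) 1,
                (kernelPart U true q.1 q.2) ^ 2))
             (Real.sqrt (∫ q in Set.Icc (0 : ℝ) 1 ×ˢ Set.Icc (0 : ℝ) 1,
                (kernelPart U false q.1 q.2) ^ 2))) ^ (l - 1) := by
  obtain ⟨k, rfl⟩ : ∃ k, l = k + 1 := ⟨l - 1, by omega⟩
  set μ : Measure ℝ := volume.restrict (Set.Icc 0 1) with hμ
  have : IsProbabilityMeasure μ := ⟨by simp [μ, Real.volume_Icc]⟩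
  set M := max (√(∫ q in Set.Icc (0 : ℝ) 1 ×ˢ Set.Icc (0 : ℝ) 1, (kernelPart U true q.1 q.2) ^ 2))
    (√(∫ q in Set.Icc (0 : ℝ) 1 ×ˢ Set.Icc (0 : ℝ) 1, (kernelPart U false q.1 q.2) ^ 2))
  have hM0 : 0 ≤ M := (Real.sqrt_nonneg _).trans (le_max_left _ _)
  have hM : ∀ b, ∫ p, kernelPart U b p.1 p.2 ^ 2 ∂(μ.prod μ) ≤ M ^ 2 := by
    intro b
    rw [hμ, Measure.prod_restrict, ← Measure.volume_eq_prod, ← Real.sqrt_le_left hM0]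
    cases b
    · exact le_max_right _ _
    · exact le_max_left _ _
  rw [volume_pi, Measure.restrict_pi_pi]
  exact abs_integral_pathProduct_le (fun i => measurable_kernelPart hmeas (s i))
    (fun i => abs_kernelPart_le_one hbd (s i)) (kernelPart_comm hsym _) hM0 fun i => hM _
end

section
/- For a graph F of maximal degree Δ(F) ≥ 2 and a symmetric measurable kernel U: [0,1]² → [−1,1], the homomorphism density satisfies |t(F,U)| ≤ ‖U‖_{Δ(F)}^{e(F)} ≤ ‖U‖₂^{2e(F)/Δ(F)}, where ‖U‖_q is the L^q norm on [0,1]². -/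
/-!
Finner's inequality. Integrate the coordinates `x_i` out one at a time. At most `Δ` edge factors
involve `x_i`, so Hölder's inequality with exponent `Δ` bounds the integral over `x_i` of their
product by the product of their `L^Δ` norms in `x_i`; each of these norms is a new factor that
still depends only on the endpoints of its edge, so the degree condition survives and the step can
be iterated. Once every coordinate is integrated out, each edge contributes the `L^Δ` norm of its
factor on `[0,1]^v`, which is `‖U‖_Δ` because the two endpoints are independent coordinates.
The second inequality holds because `|U|^Δ ≤ |U|^2` pointwise when `|U| ≤ 1`.
-/

open MeasureTheory Finset
open scoped ENNReal

lemma lintegral_prod_le_prod_lintegral_rpow_of_card_le {α ι : Type*} [MeasurableSpace α]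
    {μ : Measure α} [IsProbabilityMeasure μ] {Δ : ℕ} (hΔ : 0 < Δ) (s : Finset ι)
    (hs : #s ≤ Δ) (g : ι → α → ℝ≥0∞) (hg : ∀ i ∈ s, Measurable (g i)) :
    ∫⁻ y, ∏ i ∈ s, g i y ∂μ ≤ ∏ i ∈ s, (∫⁻ y, g i y ^ (Δ : ℝ) ∂μ) ^ (Δ : ℝ)⁻¹ := by
  have hΔR : (0 : ℝ) < Δ := by positivity
  -- Hölder with weight `1 / Δ` on each factor, padded by the constant `1` carrying the
  -- remaining weight `1 - #s / Δ`.
  let p : Option ι → ℝ := fun o => o.elim (1 - #s / Δ) fun _ => (Δ : ℝ)⁻¹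
  let f : Option ι → α → ℝ≥0∞ := fun o => o.elim (fun _ => 1) fun i y => g i y ^ (Δ : ℝ)
  have hf : ∀ o ∈ insertNone s, AEMeasurable (f o) μ := by
    rintro (_ | i) hi
    · exact aemeasurable_const
    · exact ((hg i (by simpa using hi)).pow_const _).aemeasurable
  have hp_sum : ∑ o ∈ insertNone s, p o = 1 := by
    simp only [sum_insertNone, p, Option.elim, sum_const, nsmul_eq_mul]
    field_simp
    ring
  have hp_nonneg : ∀ o ∈ insertNone s, 0 ≤ p o := by
    rintro (_ | i) _
    · exact sub_nonneg.2 (div_le_one_of_le₀ (by exact_mod_cast hs) hΔR.le)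
    · exact inv_nonneg.2 hΔR.le
  calc ∫⁻ y, ∏ i ∈ s, g i y ∂μ
      = ∫⁻ y, ∏ o ∈ insertNone s, f o y ^ p o ∂μ := by
        simp only [prod_insertNone, f, p, Option.elim, ENNReal.one_rpow, one_mul,
          ENNReal.rpow_rpow_inv hΔR.ne']
    _ ≤ ∏ o ∈ insertNone s, (∫⁻ y, f o y ∂μ) ^ p o :=
        ENNReal.lintegral_prod_norm_pow_le _ hf hp_sum hp_nonneg
    _ = ∏ i ∈ s, (∫⁻ y, g i y ^ (Δ : ℝ) ∂μ) ^ (Δ : ℝ)⁻¹ := by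
        simp [prod_insertNone, f, p]

section Finner

variable {ι J : Type*} [DecidableEq ι] [Fintype J] {X : ι → Type*} [∀ i, MeasurableSpace (X i)]
  {μ : ∀ i, Measure (X i)} [∀ i, IsProbabilityMeasure (μ i)] {Δ : ℕ}

lemma lintegral_prod_update_le (hΔ : 0 < Δ) {S : J → Finset ι} {i : ι}
    (hS : #{j | i ∈ S j} ≤ Δ) {f : J → (∀ i, X i) → ℝ≥0∞} (hf : ∀ j, Measurable (f j))
    (hfS : ∀ j, DependsOn (f j) (S j)) (x : ∀ i, X i) :
    ∫⁻ y, ∏ j, f j (Function.update x i y) ∂μ i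
      ≤ ∏ j, (∫⁻ y, f j (Function.update x i y) ^ (Δ : ℝ) ∂μ i) ^ (Δ : ℝ)⁻¹ := by
  let T : Finset J := {j | i ∈ S j}
  have hconst : ∀ j ∈ ({j | i ∉ S j} : Finset J), ∀ y, f j (Function.update x i y) = f j x :=
    fun j hj y => hfS j fun k hk =>
      Function.update_of_ne (ne_of_mem_of_not_mem hk (mem_filter.1 hj).2) _ _
  have hnorm : ∀ j ∈ ({j | i ∉ S j} : Finset J),
      (∫⁻ y, f j (Function.update x i y) ^ (Δ : ℝ) ∂μ i) ^ (Δ : ℝ)⁻¹ = f j x := fun j hj => by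
    simp only [hconst j hj, lintegral_const, measure_univ, mul_one]
    exact ENNReal.rpow_rpow_inv (by positivity) _
  have hmeas : ∀ j, Measurable fun y => f j (Function.update x i y) := fun j =>
    (hf j).comp (measurable_update x)
  calc ∫⁻ y, ∏ j, f j (Function.update x i y) ∂μ i
      = ∫⁻ y, (∏ j ∈ T, f j (Function.update x i y)) * ∏ j with i ∉ S j, f j x ∂μ i := by
        refine lintegral_congr fun y => ?_
        rw [← prod_filter_mul_prod_filter_not univ (fun j => i ∈ S j),
          prod_congr rfl fun j hj => hconst j hj y]
    _ = (∫⁻ y, ∏ j ∈ T, f j (Function.update x i y) ∂μ i) * ∏ j with i ∉ S j, f j x :=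
        lintegral_mul_const _ (measurable_prod _ fun j _ => hmeas j)
    _ ≤ (∏ j ∈ T, (∫⁻ y, f j (Function.update x i y) ^ (Δ : ℝ) ∂μ i) ^ (Δ : ℝ)⁻¹)
          * ∏ j with i ∉ S j, f j x := by
        gcongr
        exact lintegral_prod_le_prod_lintegral_rpow_of_card_le hΔ _ hS _ fun j _ => hmeas j
    _ = ∏ j, (∫⁻ y, f j (Function.update x i y) ^ (Δ : ℝ) ∂μ i) ^ (Δ : ℝ)⁻¹ := by
        rw [← prod_congr rfl hnorm, prod_filter_mul_prod_filter_not]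

theorem lmarginal_prod_le_prod_lmarginal_rpow (hΔ : 0 < Δ) {S : J → Finset ι}
    (hS : ∀ i, #{j | i ∈ S j} ≤ Δ) (s : Finset ι) {f : J → (∀ i, X i) → ℝ≥0∞}
    (hf : ∀ j, Measurable (f j)) (hfS : ∀ j, DependsOn (f j) (S j)) (x : ∀ i, X i) :
    (∫⋯∫⁻_s, (fun x => ∏ j, f j x) ∂μ) x
      ≤ ∏ j, (∫⋯∫⁻_s, (fun x => f j x ^ (Δ : ℝ)) ∂μ) x ^ (Δ : ℝ)⁻¹ := by
  induction s using Finset.induction generalizing f x with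
  | empty => simp only [lmarginal_empty, ENNReal.rpow_rpow_inv (Nat.cast_pos.2 hΔ).ne', le_rfl]
  | insert i s hi ih =>
    let g : J → (∀ i, X i) → ℝ≥0∞ := fun j x =>
      (∫⁻ y, f j (Function.update x i y) ^ (Δ : ℝ) ∂μ i) ^ (Δ : ℝ)⁻¹
    have hg : ∀ j, Measurable (g j) := fun j =>
      (((hf j).comp measurable_update').pow_const _).lintegral_prod_right'.pow_const _
    have hgS : ∀ j, DependsOn (g j) (S j) := fun j x x' hxx' => by
      have hupd : ∀ y, f j (Function.update x i y) = f j (Function.update x' i y) := fun y =>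
        ((hfS j).update i y).mono (coe_subset.2 (erase_subset i _)) hxx'
      simp only [g, hupd]
    have hg_pow : ∀ j, (fun x => g j x ^ (Δ : ℝ)) =
        fun x => ∫⁻ y, f j (Function.update x i y) ^ (Δ : ℝ) ∂μ i := fun j => by
      simp only [g, ENNReal.rpow_inv_rpow (Nat.cast_pos.2 hΔ).ne']
    calc (∫⋯∫⁻_insert i s, (fun x => ∏ j, f j x) ∂μ) x
        = (∫⋯∫⁻_s, (fun x => ∫⁻ y, ∏ j, f j (Function.update x i y) ∂μ i) ∂μ) x := by
          rw [lmarginal_insert' _ (measurable_prod _ fun j _ => hf j) hi]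
      _ ≤ (∫⋯∫⁻_s, (fun x => ∏ j, g j x) ∂μ) x :=
          lmarginal_mono (fun x => lintegral_prod_update_le hΔ (hS i) hf hfS x) x
      _ ≤ ∏ j, (∫⋯∫⁻_s, (fun x => g j x ^ (Δ : ℝ)) ∂μ) x ^ (Δ : ℝ)⁻¹ := ih hg hgS x
      _ = ∏ j, (∫⋯∫⁻_insert i s, (fun x => f j x ^ (Δ : ℝ)) ∂μ) x ^ (Δ : ℝ)⁻¹ := by
          refine prod_congr rfl fun j _ => ?_
          rw [hg_pow j, lmarginal_insert' _ ((hf j).pow_const _) hi]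

theorem lintegral_prod_le_prod_lintegral_rpow [Fintype ι] (hΔ : 0 < Δ) {S : J → Finset ι}
    (hS : ∀ i, #{j | i ∈ S j} ≤ Δ) {f : J → (∀ i, X i) → ℝ≥0∞}
    (hf : ∀ j, Measurable (f j)) (hfS : ∀ j, DependsOn (f j) (S j)) :
    ∫⁻ x, ∏ j, f j x ∂Measure.pi μ ≤ ∏ j, (∫⁻ x, f j x ^ (Δ : ℝ) ∂Measure.pi μ) ^ (Δ : ℝ)⁻¹ := by
  have := fun i => nonempty_of_isProbabilityMeasure (μ i)
  obtain ⟨x⟩ : Nonempty (∀ i, X i) := inferInstance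
  simpa only [lmarginal_univ] using
    lmarginal_prod_le_prod_lmarginal_rpow (μ := μ) hΔ hS univ hf hfS x

end Finner

section Graph

variable {α V : Type*} [MeasurableSpace α] {μ : Measure α} [IsProbabilityMeasure μ] [Fintype V]

lemma lintegral_pi_eval_pair {a b : V} (hab : a ≠ b) {g : α × α → ℝ≥0∞} (hg : Measurable g) :
    ∫⁻ x, g (x a, x b) ∂Measure.pi (fun _ => μ) = ∫⁻ q, g q ∂μ.prod μ := by
  have hpair := (ProbabilityTheory.iIndepFun_pi (μ := fun _ : V => μ) (X := fun _ x => x)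
    fun _ => aemeasurable_id).indepFun hab
  rw [ProbabilityTheory.indepFun_iff_map_prod_eq_prod_map_map (measurable_pi_apply a).aemeasurable
    (measurable_pi_apply b).aemeasurable, (measurePreserving_eval _ a).map_eq,
    (measurePreserving_eval _ b).map_eq] at hpair
  rw [← hpair, lintegral_map hg ((measurable_pi_apply a).prodMk (measurable_pi_apply b))]

theorem lintegral_prod_enorm_edge_le [DecidableEq V] (G : SimpleGraph V) [DecidableRel G.Adj]
    {Δ : ℕ} (hΔ : 0 < Δ) (hdeg : ∀ v, G.degree v ≤ Δ) {U : α → α → ℝ}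
    (hU : Measurable fun q : α × α => U q.1 q.2) (hsym : ∀ x y, U x y = U y x) :
    ∫⁻ x, ∏ e ∈ G.edgeFinset,
        ‖Sym2.lift ⟨fun i j => U (x i) (x j), fun i j => hsym (x i) (x j)⟩ e‖ₑ
        ∂Measure.pi (fun _ => μ)
      ≤ ((∫⁻ q, ‖U q.1 q.2‖ₑ ^ (Δ : ℝ) ∂μ.prod μ) ^ (Δ : ℝ)⁻¹) ^ #G.edgeFinset := by
  let f : G.edgeFinset → (V → α) → ℝ≥0∞ := fun e x =>
    ‖Sym2.lift ⟨fun i j => U (x i) (x j), fun i j => hsym (x i) (x j)⟩ e.1‖ₑ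
  have hf : ∀ e, Measurable (f e) := by
    rintro ⟨e, -⟩
    induction e using Sym2.ind with
    | _ a b =>
      simp only [f, Sym2.lift_mk]
      exact (hU.comp (f := fun x : V → α => (x a, x b)) (by fun_prop)).enorm
  have hfS : ∀ e, DependsOn (f e) (e.1.toFinset) := by
    rintro ⟨e, -⟩
    induction e using Sym2.ind with
    | _ a b => exact fun x y hxy => by simp [f, hxy a (by simp), hxy b (by simp)]
  have hS : ∀ v, #{e : G.edgeFinset | v ∈ e.1.toFinset} ≤ Δ := fun v => by
    simp only [Sym2.mem_toFinset]
    rw [card_filter, sum_coe_sort G.edgeFinset (fun e => if v ∈ e then 1 else 0), ← card_filter,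
      ← G.incidenceFinset_eq_filter, G.card_incidenceFinset_eq_degree]
    exact hdeg v
  have hnorm : ∀ e, ∫⁻ x, f e x ^ (Δ : ℝ) ∂Measure.pi (fun _ => μ)
      = ∫⁻ q, ‖U q.1 q.2‖ₑ ^ (Δ : ℝ) ∂μ.prod μ := by
    rintro ⟨e, he⟩
    induction e using Sym2.ind with
    | _ a b => exact lintegral_pi_eval_pair (G.mem_edgeFinset.1 he).ne (hU.enorm.pow_const _)
  calc _ = ∫⁻ x, ∏ e, f e x ∂Measure.pi (fun _ => μ) :=
        lintegral_congr fun x => (prod_coe_sort G.edgeFinset _).symm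
    _ ≤ _ := lintegral_prod_le_prod_lintegral_rpow hΔ hS hf hfS
    _ = _ := by simp only [hnorm, prod_const, card_univ, Fintype.card_coe]

end Graph

section Real

variable {β : Type*} [MeasurableSpace β] {ν : Measure β} {g : β → ℝ}

lemma AEMeasurable.aestronglyMeasurable_abs_rpow (hg : AEMeasurable g ν) (p : ℝ) :
    AEStronglyMeasurable (fun y => |g y| ^ p) ν :=
  (hg.abs.pow_const p).aestronglyMeasurable

lemma integral_abs_rpow_eq_toReal_lintegral (hg : AEMeasurable g ν) {p : ℝ}
    (hp : 0 ≤ p) : ∫ y, |g y| ^ p ∂ν = (∫⁻ y, ‖g y‖ₑ ^ p ∂ν).toReal := by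
  rw [integral_eq_lintegral_of_nonneg_ae (ae_of_all _ fun y => by positivity)
    (hg.aestronglyMeasurable_abs_rpow p)]
  simp only [Real.enorm_eq_ofReal_abs, ENNReal.ofReal_rpow_of_nonneg (abs_nonneg _) hp]

lemma lintegral_enorm_rpow_le_one [IsProbabilityMeasure ν] (hg : ∀ y, |g y| ≤ 1) {p : ℝ}
    (hp : 0 ≤ p) : ∫⁻ y, ‖g y‖ₑ ^ p ∂ν ≤ 1 := by
  calc ∫⁻ y, ‖g y‖ₑ ^ p ∂ν ≤ ∫⁻ _, 1 ∂ν := lintegral_mono fun y =>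
        ENNReal.rpow_le_one (by simpa [Real.enorm_eq_ofReal_abs] using hg y) hp
    _ = 1 := by simp

lemma integral_abs_rpow_le_of_abs_le_one [IsFiniteMeasure ν] (hg : AEMeasurable g ν)
    (hg1 : ∀ y, |g y| ≤ 1) {p q : ℝ} (hq : 0 ≤ q) (hqp : q ≤ p) :
    ∫ y, |g y| ^ p ∂ν ≤ ∫ y, |g y| ^ q ∂ν := by
  refine integral_mono_of_nonneg (ae_of_all _ fun y => by positivity) ?_
    (ae_of_all _ fun y => Real.rpow_le_rpow_of_exponent_ge' (abs_nonneg _) (hg1 y) hq hqp)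
  refine Integrable.of_bound (hg.aestronglyMeasurable_abs_rpow q) 1 (ae_of_all _ fun y => ?_)
  rw [Real.norm_eq_abs, abs_of_nonneg (by positivity)]
  exact Real.rpow_le_one (abs_nonneg _) (hg1 y) hq

end Real

theorem abs_integral_prod_edge_le {α V : Type*} [MeasurableSpace α] {μ : Measure α}
    [IsProbabilityMeasure μ] [Fintype V] [DecidableEq V] (G : SimpleGraph V) [DecidableRel G.Adj]
    {Δ : ℕ} (hΔ : 0 < Δ) (hdeg : ∀ v, G.degree v ≤ Δ) {U : α → α → ℝ}
    (hU : Measurable fun q : α × α => U q.1 q.2) (hsym : ∀ x y, U x y = U y x)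
    (hU1 : ∀ x y, |U x y| ≤ 1) :
    |∫ x, ∏ e ∈ G.edgeFinset, Sym2.lift ⟨fun i j => U (x i) (x j), fun i j => hsym (x i) (x j)⟩ e
        ∂Measure.pi (fun _ => μ)|
      ≤ ((∫ q, |U q.1 q.2| ^ (Δ : ℝ) ∂μ.prod μ) ^ (1 / (Δ : ℝ))) ^ #G.edgeFinset := by
  have hfin : ((∫⁻ q, ‖U q.1 q.2‖ₑ ^ (Δ : ℝ) ∂μ.prod μ) ^ (Δ : ℝ)⁻¹) ^ #G.edgeFinset ≠ ⊤ :=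
    ENNReal.pow_ne_top <| ENNReal.rpow_ne_top_of_nonneg (by positivity) <|
      ne_top_of_le_ne_top ENNReal.one_ne_top <|
        lintegral_enorm_rpow_le_one (fun q : α × α => hU1 q.1 q.2) (by positivity)
  rw [integral_abs_rpow_eq_toReal_lintegral hU.aemeasurable (by positivity), one_div,
    ENNReal.toReal_rpow, ← ENNReal.toReal_pow, ← Real.norm_eq_abs, ← toReal_enorm]
  refine ENNReal.toReal_mono hfin ((enorm_integral_le_lintegral_enorm _).trans ?_)
  simpa only [enorm_eq_nnnorm, nnnorm_prod, ENNReal.ofNNReal_finsetProd] using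
    lintegral_prod_enorm_edge_le G hΔ hdeg hU hsym

/-- Generalized Hölder bound for homomorphism densities: for a graph `F` with maximal
degree `Δ = Δ(F) ≥ 2` and a symmetric kernel `U : [0,1]² → [-1,1]`,
`|t(F,U)| ≤ ‖U‖_Δ^{e(F)} ≤ ‖U‖₂^{2e(F)/Δ}`. -/
theorem stmt_13 {v : ℕ} (F : SimpleGraph (Fin v)) [DecidableRel F.Adj]
    (hΔ : 2 ≤ F.maxDegree)
    (U : ℝ → ℝ → ℝ)
    (hmeas : Measurable fun q : ℝ × ℝ => U q.1 q.2)
    (hsym : ∀ x y, U x y = U y x)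
    (hbd : ∀ x y, |U x y| ≤ 1) :
    |∫ x in Set.univ.pi fun _ : Fin v => Set.Icc (0 : ℝ) 1,
        ∏ e ∈ F.edgeFinset,
          Sym2.lift ⟨fun i j => U (x i) (x j), fun i j => hsym (x i) (x j)⟩ e|
      ≤ ((∫ q in Set.Icc (0 : ℝ) 1 ×ˢ Set.Icc (0 : ℝ) 1,
            |U q.1 q.2| ^ (F.maxDegree : ℝ)) ^ (1 / (F.maxDegree : ℝ)))
          ^ F.edgeFinset.card ∧
    ((∫ q in Set.Icc (0 : ℝ) 1 ×ˢ Set.Icc (0 : ℝ) 1,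
          |U q.1 q.2| ^ (F.maxDegree : ℝ)) ^ (1 / (F.maxDegree : ℝ)))
        ^ F.edgeFinset.card
      ≤ ((∫ q in Set.Icc (0 : ℝ) 1 ×ˢ Set.Icc (0 : ℝ) 1,
            |U q.1 q.2| ^ (2 : ℝ)) ^ ((1 : ℝ) / 2))
          ^ ((2 * F.edgeFinset.card : ℝ) / (F.maxDegree : ℝ)) := by
  set μ : Measure ℝ := volume.restrict (Set.Icc 0 1)
  have : IsProbabilityMeasure μ := ⟨by simp [μ]⟩
  have hbox : volume.restrict (Set.univ.pi fun _ : Fin v => Set.Icc (0 : ℝ) 1)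
      = Measure.pi fun _ => μ := by
    rw [volume_pi, Measure.restrict_pi_pi]
  have hsquare : volume.restrict (Set.Icc (0 : ℝ) 1 ×ˢ Set.Icc (0 : ℝ) 1) = μ.prod μ := by
    rw [Measure.volume_eq_prod, Measure.prod_restrict]
  rw [hbox, hsquare]
  refine ⟨abs_integral_prod_edge_le F (by omega) F.degree_le_maxDegree hmeas hsym hbd, ?_⟩
  set a := ∫ q, |U q.1 q.2| ^ (F.maxDegree : ℝ) ∂μ.prod μ
  set b := ∫ q, |U q.1 q.2| ^ (2 : ℝ) ∂μ.prod μ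
  have ha : 0 ≤ a := integral_nonneg fun q => by positivity
  have hab : a ≤ b := integral_abs_rpow_le_of_abs_le_one hmeas.aemeasurable
    (fun q => hbd q.1 q.2) zero_le_two (by exact_mod_cast hΔ)
  calc (a ^ (1 / (F.maxDegree : ℝ))) ^ #F.edgeFinset
      ≤ (b ^ (1 / (F.maxDegree : ℝ))) ^ #F.edgeFinset := by gcongr
    _ = (b ^ ((1 : ℝ) / 2)) ^ ((2 * #F.edgeFinset : ℝ) / F.maxDegree) := by
      rw [← Real.rpow_natCast, ← Real.rpow_mul (ha.trans hab), ← Real.rpow_mul (ha.trans hab)]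
      congr 1
      field_simp
end

section
/- Let H be a connected graph of maximal degree Δ, and let H* be the subgraph induced on vertices of degree Δ. The nonempty independent sets S of H* are in one-to-one correspondence with subgraphs F ⊆ H (consisting of all edges of H incident to S) such that the vertex cover number satisfies τ(F) = e(F)/Δ = |S|. -/
/-- Let `H` be connected with maximal degree `Δ ≥ 2` and let `S` be a nonempty
independent set of vertices of degree `Δ` (i.e. an independent set of `H*`). Then the
subgraph `F_S` of `H` consisting of all edges incident to `S` has `e(F_S) = Δ·|S|`,
`S` is a vertex cover of `F_S`, and every vertex cover of `F_S` has size at least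
`|S|` (so `τ(F_S) = |S| = e(F_S)/Δ`). -/
theorem stmt_15 {V : Type*} [Fintype V] [DecidableEq V]
    (H : SimpleGraph V) [DecidableRel H.Adj]
    (hconn : H.Connected) (hΔ : 2 ≤ H.maxDegree)
    (S : Finset V) (hS : S.Nonempty)
    (hdeg : ∀ v ∈ S, H.degree v = H.maxDegree)
    (hind : ∀ u ∈ S, ∀ v ∈ S, ¬ H.Adj u v) :
    {e ∈ H.edgeSet | ∃ v ∈ e, v ∈ (S : Set V)}.ncard = H.maxDegree * S.card ∧
    (∀ e ∈ {e ∈ H.edgeSet | ∃ v ∈ e, v ∈ (S : Set V)}, ∃ v ∈ e, v ∈ (S : Set V)) ∧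
    (∀ T : Finset V,
      (∀ e ∈ {e ∈ H.edgeSet | ∃ v ∈ e, v ∈ (S : Set V)}, ∃ v ∈ e, v ∈ (T : Set V)) →
      S.card ≤ T.card) := by
  classical
  set E : Finset (Sym2 V) := H.edgeFinset.filter (fun e => ∃ v ∈ e, v ∈ S) with hE
  have hset : {e ∈ H.edgeSet | ∃ v ∈ e, v ∈ (S : Set V)} = ↑E := by
    ext e
    simp [hE, Set.mem_setOf_eq, SimpleGraph.mem_edgeFinset]
  have hEeq : E = S.biUnion (fun v => H.incidenceFinset v) := by
    ext e
    simp only [hE, Finset.mem_filter, Finset.mem_biUnion,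
      SimpleGraph.mem_incidenceFinset, SimpleGraph.incidenceSet, Set.mem_setOf_eq]
    constructor
    · rintro ⟨he, v, hv, hvS⟩
      exact ⟨v, hvS, SimpleGraph.mem_edgeFinset.mp he, hv⟩
    · rintro ⟨v, hvS, he, hv⟩
      exact ⟨SimpleGraph.mem_edgeFinset.mpr he, v, hv, hvS⟩
  have hdisj : ∀ u ∈ S, ∀ v ∈ S, u ≠ v →
      Disjoint (H.incidenceFinset u) (H.incidenceFinset v) := by
    intro u hu v hv huv
    rw [Finset.disjoint_left]
    intro e heu hev
    rw [SimpleGraph.mem_incidenceFinset] at heu hev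
    simp only [SimpleGraph.incidenceSet, Set.mem_setOf_eq] at heu hev
    have h1 := heu.2
    have h2 := hev.2
    have : e = s(u, v) := (Sym2.mem_and_mem_iff huv).mp ⟨h1, h2⟩
    subst this
    exact hind u hu v hv (H.mem_edgeSet.mp heu.1)
  have hcardE : E.card = H.maxDegree * S.card := by
    rw [hEeq, Finset.card_biUnion hdisj]
    rw [Finset.sum_congr rfl (fun v hv => by
      rw [SimpleGraph.card_incidenceFinset_eq_degree, hdeg v hv])]
    simp [Finset.sum_const, mul_comm]
  refine ⟨by rw [hset, Set.ncard_coe_finset, hcardE], fun e he => he.2, ?_⟩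
  intro T hT
  have hsub : E ⊆ T.biUnion (fun v => H.incidenceFinset v) := by
    intro e he
    obtain ⟨v, hv, hvT⟩ := hT e (by rw [hset]; exact_mod_cast he)
    rw [Finset.mem_biUnion]
    refine ⟨v, hvT, ?_⟩
    rw [SimpleGraph.mem_incidenceFinset]
    exact ⟨SimpleGraph.mem_edgeFinset.mp (Finset.mem_filter.mp he).1, hv⟩
  have hle : E.card ≤ H.maxDegree * T.card := by
    calc E.card ≤ (T.biUnion (fun v => H.incidenceFinset v)).card :=
          Finset.card_le_card hsub
      _ ≤ ∑ v ∈ T, (H.incidenceFinset v).card := Finset.card_biUnion_le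
      _ ≤ ∑ v ∈ T, H.maxDegree := Finset.sum_le_sum (fun v _ => by
          rw [SimpleGraph.card_incidenceFinset_eq_degree]
          exact H.degree_le_maxDegree v)
      _ = H.maxDegree * T.card := by simp [mul_comm]
  rw [hcardE] at hle
  exact Nat.le_of_mul_le_mul_left hle (by omega)
end
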